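/- arXiv:1003.1289 — 3 statements merged into one kernel-verified Lean document; each statement's English description precedes it below -/
import Mathlib

section
/- There exists a constant c ≥ 1, independent of d, such that for all d ≥ 3, all real L ≥ d and all x ∈ Z^d, the simple random walk on Z^d satisfies P_x[H_{B(0,L)} < ∞] ≤ (cL/|x|)^{d−2} ∧ 1, where H_{B(0,L)} is the entrance time of the closed Euclidean ball B(0,L). -/
open MeasureTheory Filter

abbrev Zd (d : ℕ) := Fin d → ℤ

/-- The unit step in direction `i`, with sign `s` (`true` = `+1`). -/
def dir (d : ℕ) (i : Fin d) (s : Bool) : Zd d :=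
  fun j => if j = i then (if s then 1 else -1) else 0

/-- ℓ¹-norm on ℤ^d. -/
def norm1 {d : ℕ} (x : Zd d) : ℕ := ∑ j, (x j).natAbs

/-- ℓ∞-norm on ℤ^d. -/
def normInf {d : ℕ} (x : Zd d) : ℕ := Finset.univ.sup fun j => (x j).natAbs

/-- Euclidean norm on ℤ^d. -/
noncomputable def euclid {d : ℕ} (x : Zd d) : ℝ := Real.sqrt (∑ j, ((x j : ℝ)) ^ 2)

/-- Nearest-neighbor adjacency on ℤ^d. -/
def adjZ {d : ℕ} (x y : Zd d) : Prop := norm1 (x - y) = 1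

-- `hitProb d K n x` is the probability that simple random walk started at `x`
-- enters `K` within the first `n` steps.
open Classical in
noncomputable def hitProb (d : ℕ) (K : Set (Zd d)) : ℕ → Zd d → ℝ
  | 0, x => if x ∈ K then 1 else 0
  | n + 1, x => if x ∈ K then 1
      else (2 * d : ℝ)⁻¹ * ∑ i : Fin d, ∑ s : Bool, hitProb d K n (x + dir d i s)

/-- `P_x[H_K < ∞]`, the probability that the walk ever enters `K`. -/
noncomputable def hitProbInfty (d : ℕ) (K : Set (Zd d)) (x : Zd d) : ℝ :=
  ⨆ n : ℕ, hitProb d K n x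

/-- Closed Euclidean ball of radius `L` around the origin in ℤ^d. -/
def ballE (d : ℕ) (L : ℝ) : Set (Zd d) := {x | euclid x ≤ L}

/-!
With `q = (d - 2) / 2`, the function `x ↦ (|x|² + 15 L²)^{-q}` is superharmonic for the walk
as soon as `L ≥ d`; normalised to be `≥ 1` on `B(0, L)`, it dominates every
`P_x[H_{B(0,L)} ≤ n]`, and it is at most `(4 L / |x|)^{d-2}`. Superharmonicity comes from a
fourth-order Taylor bound for `(A + t)^{-q} + (A - t)^{-q}` with `A = |x|² + 15 L² + 1`:
summed over the `2d` neighbours, the second-order terms are paid for by the gain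
`(A - 1)^{-q} - A^{-q} ≥ q A^{-q-1}`, and `15 L²` is large enough to absorb the fourth-order
remainder.
-/

open Set

lemma nonneg_of_hasDerivAt_chain {T : ℝ} (n : ℕ) (G : ℕ → ℝ → ℝ)
    (hG : ∀ k < n, ∀ u ∈ Icc 0 T, HasDerivAt (G k) (G (k + 1) u) u)
    (hG0 : ∀ k < n, 0 ≤ G k 0) (hGn : ∀ u ∈ Icc 0 T, 0 ≤ G n u) :
    ∀ u ∈ Icc 0 T, 0 ≤ G 0 u := by
  induction n generalizing G with
  | zero => exact hGn
  | succ n ih =>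
    have hG1 : ∀ u ∈ Icc 0 T, 0 ≤ G 1 u :=
      ih (fun k => G (k + 1)) (fun k hk => hG (k + 1) (by omega))
        (fun k hk => hG0 (k + 1) (by omega)) hGn
    have hmono : MonotoneOn (G 0) (Icc 0 T) :=
      monotoneOn_of_hasDerivWithinAt_nonneg (convex_Icc 0 T)
        (fun u hu => (hG 0 (by omega) u hu).continuousAt.continuousWithinAt)
        (fun u hu => (hG 0 (by omega) u (interior_subset hu)).hasDerivWithinAt)
        (fun u hu => hG1 u (interior_subset hu))
    intro u hu
    exact (hG0 0 (by omega)).trans (hmono ⟨le_rfl, hu.1.trans hu.2⟩ hu hu.1)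

/-- The `k`-th derivative of `u ↦ (A + u) ^ p + (A - u) ^ p`. -/
noncomputable def symmRpowDeriv (A p : ℝ) (k : ℕ) (u : ℝ) : ℝ :=
  (descPochhammer ℝ k).eval p * ((A + u) ^ (p - k) + (-1) ^ k * (A - u) ^ (p - k))

lemma hasDerivAt_symmRpowDeriv {A p u : ℝ} (k : ℕ) (hu : |u| < A) :
    HasDerivAt (symmRpowDeriv A p k) (symmRpowDeriv A p (k + 1) u) u := by
  have hplus : 0 < A + u := by linarith [neg_abs_le u]
  have hminus : 0 < A - u := by linarith [le_abs_self u]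
  have dplus := ((hasDerivAt_id u).const_add A).rpow_const (p := p - k) (Or.inl hplus.ne')
  have dminus := ((hasDerivAt_id u).const_sub A).rpow_const (p := p - k) (Or.inl hminus.ne')
  refine (show HasDerivAt (symmRpowDeriv A p k) _ u from
    (dplus.add (dminus.const_mul ((-1) ^ k))).const_mul
      ((descPochhammer ℝ k).eval p)).congr_deriv ?_
  simp only [symmRpowDeriv, descPochhammer_succ_eval, id, Nat.cast_succ, pow_succ,
    sub_add_eq_sub_sub]
  ring

open Polynomial in
theorem rpow_add_add_rpow_sub_le {A T p t : ℝ} (hp : p ≤ 0) (hT : 0 ≤ T) (hTA : T < A)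
    (ht : |t| ≤ T) :
    (A + t) ^ p + (A - t) ^ p ≤ 2 * A ^ p + p * (p - 1) * A ^ (p - 2) * t ^ 2 +
      p * (p - 1) * (p - 2) * (p - 3) / 12 * (A - T) ^ (p - 4) * t ^ 4 := by
  wlog ht0 : 0 ≤ t generalizing t
  · have := this (t := -t) (by rwa [abs_neg]) (by linarith)
    rw [sub_neg_eq_add, ← sub_eq_add_neg, even_two.neg_pow, (by decide : Even 4).neg_pow]
      at this
    linarith
  set K := p * (p - 1) * (p - 2) * (p - 3) / 12 * (A - T) ^ (p - 4)
  set P : ℝ[X] := C (2 * A ^ p) + C (p * (p - 1) * A ^ (p - 2)) * X ^ 2 + C K * X ^ 4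
  -- `P` is the cubic Taylor polynomial at `0` of `φ u = (A + u) ^ p + (A - u) ^ p` plus `K u ^ 4`:
  -- the derivatives of `P - φ` of order `< 4` vanish at `0`, and the fourth is `≥ 0` on `[0, T]`.
  have key := nonneg_of_hasDerivAt_chain 4
    (fun k u => (derivative^[k] P).eval u - symmRpowDeriv A p k u) ?_ ?_ ?_ t
    ⟨ht0, (le_abs_self t).trans ht⟩
  · simpa [P, symmRpowDeriv] using key
  · intro k _ u hu
    rw [Function.iterate_succ_apply']
    exact (Polynomial.hasDerivAt (derivative^[k] P) u).sub
      (hasDerivAt_symmRpowDeriv k (by rw [abs_of_nonneg hu.1]; linarith [hu.2]))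
  all_goals simp only [P, Function.iterate_succ_apply', Function.iterate_zero_apply,
    derivative_add, derivative_C, derivative_C_mul_X_pow, eval_add, eval_C, eval_mul, eval_pow,
    eval_X, zero_add, symmRpowDeriv, descPochhammer_succ_eval, descPochhammer_zero, eval_one]
  · intro k hk
    interval_cases k <;> norm_num [descPochhammer_succ_eval] <;> linarith
  · intro u hu
    have hc : 0 ≤ p * (p - 1) * (p - 2) * (p - 3) := by
      have : 0 ≤ p * (p - 1) := mul_nonneg_of_nonpos_of_nonpos hp (by linarith)
      have : 0 ≤ (p - 2) * (p - 3) := mul_nonneg_of_nonpos_of_nonpos (by linarith) (by linarith)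
      nlinarith
    have hplus : (A + u) ^ (p - 4) ≤ (A - T) ^ (p - 4) :=
      Real.rpow_le_rpow_of_nonpos (by linarith) (by linarith [hu.1]) (by linarith)
    have hminus : (A - u) ^ (p - 4) ≤ (A - T) ^ (p - 4) :=
      Real.rpow_le_rpow_of_nonpos (by linarith) (by linarith [hu.2]) (by linarith)
    norm_num
    linear_combination mul_le_mul_of_nonneg_left (add_le_add hplus hminus) hc

lemma rpow_neg_le_two_mul_rpow_neg {A B r : ℝ} (hB : 0 < B) (hBA : B ≤ A) (hr : 1 ≤ r)
    (h : r * (A - B) ≤ A / 2) : B ^ (-r) ≤ 2 * A ^ (-r) := by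
  have hA : 0 < A := hB.trans_le hBA
  have hbern : 1 + r * (-((A - B) / A)) ≤ (B / A) ^ r := by
    have := one_add_mul_self_le_rpow_one_add (s := -((A - B) / A))
      (by rw [neg_le_neg_iff, div_le_one hA]; linarith) hr
    rwa [show 1 + -((A - B) / A) = B / A by field_simp; ring] at this
  have hhalf : A ^ r ≤ 2 * B ^ r := by
    have : r * ((A - B) / A) ≤ 1 / 2 := by
      rw [← mul_div_assoc, div_le_iff₀ hA]; linarith
    rw [Real.div_rpow hB.le hA.le, le_div_iff₀ (by positivity)] at hbern
    nlinarith [Real.rpow_pos_of_pos hA r]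
  rw [Real.rpow_neg hB.le, Real.rpow_neg hA.le, ← div_eq_mul_inv, le_div_iff₀ (by positivity),
    inv_mul_le_iff₀ (by positivity)]
  linarith

lemma rpow_neg_add_mul_rpow_neg_sub_one_le {A q : ℝ} (hq : 0 ≤ q) (hA : 1 < A) :
    A ^ (-q) + q * A ^ (-q - 1) ≤ (A - 1) ^ (-q) := by
  have hA0 : 0 < A := by linarith
  have hlog : Real.log ((A - 1) / A) ≤ -(1 / A) := by
    have := Real.log_le_sub_one_of_pos (x := (A - 1) / A) (by positivity)
    rwa [show (A - 1) / A - 1 = -(1 / A) by field_simp; ring] at this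
  have hexp : 1 + q * (1 / A) ≤ ((A - 1) / A) ^ (-q) := by
    rw [Real.rpow_def_of_pos (by positivity)]
    nlinarith [Real.add_one_le_exp (Real.log ((A - 1) / A) * -q)]
  calc A ^ (-q) + q * A ^ (-q - 1) = A ^ (-q) * (1 + q * (1 / A)) := by
        rw [Real.rpow_sub_one hA0.ne']; field_simp
    _ ≤ A ^ (-q) * ((A - 1) / A) ^ (-q) := by gcongr
    _ = (A - 1) ^ (-q) := by
        rw [← Real.mul_rpow hA0.le (by positivity)]; field_simp

lemma rpow_neg_add_add_rpow_neg_sub_le {A T q t : ℝ} (hq : 0 ≤ q) (hT : 0 ≤ T) (hA : 0 < A)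
    (hTA : 2 * (q + 4) * T ≤ A) (ht : |t| ≤ T) :
    (A + t) ^ (-q) + (A - t) ^ (-q) ≤ A ^ (-q - 4) *
      (2 * A ^ 4 + q * (q + 1) * A ^ 2 * t ^ 2 + q * (q + 1) * (q + 2) * (q + 3) / 6 * t ^ 4) := by
  have htaylor := rpow_add_add_rpow_sub_le (A := A) (p := -q) (by linarith) hT (by nlinarith) ht
  have hratio : (A - T) ^ (-q - 4) ≤ 2 * A ^ (-q - 4) := by
    rw [show -q - 4 = -(q + 4) by ring]
    exact rpow_neg_le_two_mul_rpow_neg (by nlinarith) (by linarith) (by linarith) (by linarith)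
  have e4 : A ^ (-q) = A ^ (-q - 4) * A ^ 4 := by
    rw [← Real.rpow_add_natCast hA.ne']; congr 1; push_cast; ring
  have e2 : A ^ (-q - 2) = A ^ (-q - 4) * A ^ 2 := by
    rw [← Real.rpow_add_natCast hA.ne']; congr 1; push_cast; ring
  rw [e4, e2] at htaylor
  have hc : 0 ≤ q * (q + 1) * (q + 2) * (q + 3) / 12 * t ^ 4 := by positivity
  linear_combination htaylor + mul_le_mul_of_nonneg_left hratio hc

lemma sum_rpow_neg_add_add_rpow_neg_sub_le {d : ℕ} {A q : ℝ} (hq : 0 ≤ q) (hA : 0 < A)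
    (y : Fin d → ℝ) (hyA : 2 * (q + 4) * (2 * √(∑ j, y j ^ 2)) ≤ A) :
    ∑ i, ((A + 2 * y i) ^ (-q) + (A - 2 * y i) ^ (-q)) ≤ A ^ (-q - 4) *
      (2 * d * A ^ 4 + 4 * q * (q + 1) * A ^ 2 * ∑ j, y j ^ 2 +
        8 / 3 * (q * (q + 1) * (q + 2) * (q + 3)) * (∑ j, y j ^ 2) ^ 2) := by
  set S := ∑ j, y j ^ 2 with hS
  have hS0 : 0 ≤ S := by positivity
  have habs : ∀ i, |2 * y i| ≤ 2 * √S := fun i => by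
    rw [abs_mul, abs_two]
    gcongr
    exact Real.abs_le_sqrt
      (Finset.single_le_sum (f := fun j => y j ^ 2) (fun j _ => sq_nonneg _) (Finset.mem_univ i))
  have hy4 : ∑ i, y i ^ 4 ≤ S ^ 2 := by
    simpa only [← pow_mul] using
      Finset.sum_sq_le_sq_sum_of_nonneg (s := Finset.univ) fun i _ => sq_nonneg (y i)
  calc _ ≤ ∑ i, A ^ (-q - 4) * (2 * A ^ 4 + q * (q + 1) * A ^ 2 * (2 * y i) ^ 2 +
          q * (q + 1) * (q + 2) * (q + 3) / 6 * (2 * y i) ^ 4) :=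
        Finset.sum_le_sum fun i _ =>
          rpow_neg_add_add_rpow_neg_sub_le hq (by positivity) hA hyA (habs i)
    _ = A ^ (-q - 4) * (2 * d * A ^ 4 + 4 * q * (q + 1) * A ^ 2 * S +
          8 / 3 * (q * (q + 1) * (q + 2) * (q + 3)) * ∑ i, y i ^ 4) := by
        simp only [← Finset.mul_sum, Finset.sum_add_distrib, Finset.sum_const, Finset.card_univ,
          Fintype.card_fin, nsmul_eq_mul, mul_pow, hS]
        ring
    _ ≤ _ := by gcongr

theorem sum_rpow_neighbors_le {d : ℕ} {M : ℝ} (hd : 2 ≤ d) (hM : ((d : ℝ) + 6) ^ 2 ≤ M)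
    (y : Fin d → ℝ) :
    ∑ i, ((∑ j, y j ^ 2 + M + 1 + 2 * y i) ^ (-(((d : ℝ) - 2) / 2)) +
      (∑ j, y j ^ 2 + M + 1 - 2 * y i) ^ (-(((d : ℝ) - 2) / 2))) ≤
      2 * d * (∑ j, y j ^ 2 + M) ^ (-(((d : ℝ) - 2) / 2)) := by
  set S := ∑ j, y j ^ 2
  set q := ((d : ℝ) - 2) / 2
  have hdq : (d : ℝ) = 2 * q + 2 := by ring
  have hq : 0 ≤ q := by
    have : (2 : ℝ) ≤ d := by exact_mod_cast hd
    linarith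
  have hS0 : 0 ≤ S := by positivity
  have hM0 : 0 < M := lt_of_lt_of_le (by positivity) hM
  set A := S + M + 1
  have hA : 1 < A := by linarith
  -- AM-GM: `2 (d + 6) √S ≤ S + (d + 6) ^ 2`
  have hyA : 2 * (q + 4) * (2 * √S) ≤ A := by
    nlinarith [sq_nonneg (√S - (d + 6)), Real.sq_sqrt hS0]
  have hpoly : 2 * d * A ^ 4 + 4 * q * (q + 1) * A ^ 2 * S +
      8 / 3 * (q * (q + 1) * (q + 2) * (q + 3)) * S ^ 2 ≤ 2 * d * (A ^ 4 + q * A ^ 3) := by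
    have hqM : 2 / 3 * ((q + 2) * (q + 3)) * S ^ 2 ≤ M * A ^ 2 :=
      mul_le_mul (by nlinarith) (pow_le_pow_left₀ hS0 (by linarith) 2) (sq_nonneg S) hM0.le
    have hq1 : 0 ≤ 4 * q * (q + 1) := by positivity
    rw [hdq]
    linear_combination mul_le_mul_of_nonneg_left hqM hq1 + mul_nonneg hq1 (sq_nonneg A)
  have e4 : A ^ (-q) = A ^ (-q - 4) * A ^ 4 := by
    rw [← Real.rpow_add_natCast (by positivity)]; congr 1; push_cast; ring
  have e3 : A ^ (-q - 1) = A ^ (-q - 4) * A ^ 3 := by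
    rw [← Real.rpow_add_natCast (by positivity)]; congr 1; push_cast; ring
  calc _ ≤ A ^ (-q - 4) * (2 * d * (A ^ 4 + q * A ^ 3)) :=
        (sum_rpow_neg_add_add_rpow_neg_sub_le hq (by linarith) y hyA).trans (by gcongr)
    _ = 2 * d * (A ^ (-q) + q * A ^ (-q - 1)) := by rw [e4, e3]; ring
    _ ≤ 2 * d * (S + M) ^ (-q) := by
        gcongr
        simpa [A] using rpow_neg_add_mul_rpow_neg_sub_one_le hq hA

noncomputable def sqNorm {d : ℕ} (x : Zd d) : ℝ := ∑ j, (x j : ℝ) ^ 2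

lemma sqNorm_nonneg {d : ℕ} (x : Zd d) : 0 ≤ sqNorm x := by unfold sqNorm; positivity

lemma euclid_nonneg {d : ℕ} (x : Zd d) : 0 ≤ euclid x := Real.sqrt_nonneg _

lemma euclid_sq {d : ℕ} (x : Zd d) : euclid x ^ 2 = sqNorm x := Real.sq_sqrt (sqNorm_nonneg x)

lemma sqNorm_add_dir {d : ℕ} (x : Zd d) (i : Fin d) (s : Bool) :
    sqNorm (x + dir d i s) = sqNorm x + 1 + 2 * (if s then 1 else -1) * x i := by
  have h : ∀ j, ((x + dir d i s) j : ℝ) ^ 2 =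
      (x j : ℝ) ^ 2 + if j = i then 1 + 2 * (if s then 1 else -1) * (x i : ℝ) else 0 := by
    intro j
    by_cases hj : j = i
    · subst hj; cases s <;> simp [dir] <;> ring
    · simp [dir, hj]
  simp only [sqNorm, h, Finset.sum_add_distrib, Finset.sum_ite_eq', Finset.mem_univ, if_true]
  ring

lemma sum_rpow_sqNorm_add_dir_le {d : ℕ} {M : ℝ} (hd : 2 ≤ d) (hM : ((d : ℝ) + 6) ^ 2 ≤ M)
    (x : Zd d) :
    ∑ i, ∑ s, (sqNorm (x + dir d i s) + M) ^ (-(((d : ℝ) - 2) / 2)) ≤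
      2 * d * (sqNorm x + M) ^ (-(((d : ℝ) - 2) / 2)) := by
  refine le_of_eq_of_le (Finset.sum_congr rfl fun i _ => ?_)
    (sum_rpow_neighbors_le hd hM (fun j => (x j : ℝ)))
  rw [Fintype.sum_bool, sqNorm_add_dir, sqNorm_add_dir]
  simp only [if_true, Bool.false_eq_true, if_false, sqNorm]
  ring_nf

section Hitting

variable {d : ℕ} {K : Set (Zd d)} {f : Zd d → ℝ}

lemma hitProb_le_of_superharmonic (hf0 : ∀ x, 0 ≤ f x) (hfK : ∀ x ∈ K, 1 ≤ f x)
    (hf : ∀ x ∉ K, ∑ i, ∑ s, f (x + dir d i s) ≤ 2 * d * f x) (n : ℕ) (x : Zd d) :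
    hitProb d K n x ≤ f x := by
  induction n generalizing x with
  | zero =>
    simp only [hitProb]
    split_ifs with hx
    exacts [hfK x hx, hf0 x]
  | succ n ih =>
    simp only [hitProb]
    split_ifs with hx
    · exact hfK x hx
    rcases eq_or_ne d 0 with rfl | hd
    · simpa using hf0 x
    calc (2 * d : ℝ)⁻¹ * ∑ i, ∑ s, hitProb d K n (x + dir d i s)
        ≤ (2 * d : ℝ)⁻¹ * (2 * d * f x) := by
          gcongr
          exact (Finset.sum_le_sum fun i _ => Finset.sum_le_sum fun s _ => ih _).trans (hf x hx)
      _ = f x := by field_simp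

lemma hitProbInfty_le_of_superharmonic (hf0 : ∀ x, 0 ≤ f x) (hfK : ∀ x ∈ K, 1 ≤ f x)
    (hf : ∀ x ∉ K, ∑ i, ∑ s, f (x + dir d i s) ≤ 2 * d * f x) (x : Zd d) :
    hitProbInfty d K x ≤ f x :=
  ciSup_le fun n => hitProb_le_of_superharmonic hf0 hfK hf n x

lemma hitProbInfty_le_one (x : Zd d) : hitProbInfty d K x ≤ 1 :=
  hitProbInfty_le_of_superharmonic (f := fun _ => 1) (fun _ => zero_le_one)
    (fun _ _ => le_rfl) (fun _ _ => by simp [mul_comm]) x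

end Hitting

noncomputable def ballMajorant (d : ℕ) (L : ℝ) (x : Zd d) : ℝ :=
  (16 * L ^ 2) ^ (((d : ℝ) - 2) / 2) * (sqNorm x + 15 * L ^ 2) ^ (-(((d : ℝ) - 2) / 2))

section Majorant

variable {d : ℕ} {L : ℝ}

lemma ballMajorant_nonneg (x : Zd d) : 0 ≤ ballMajorant d L x := by
  have := sqNorm_nonneg x
  unfold ballMajorant
  positivity

lemma one_le_ballMajorant (hd : 2 ≤ d) (hL : 0 < L) {x : Zd d} (hx : x ∈ ballE d L) :
    1 ≤ ballMajorant d L x := by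
  have hq : 0 ≤ ((d : ℝ) - 2) / 2 := by
    have : (2 : ℝ) ≤ d := by exact_mod_cast hd
    linarith
  have hxL : sqNorm x ≤ L ^ 2 := by
    rw [← euclid_sq]; exact pow_le_pow_left₀ (Real.sqrt_nonneg _) hx 2
  have hpos : 0 < sqNorm x + 15 * L ^ 2 := by have := sqNorm_nonneg x; positivity
  rw [ballMajorant, Real.rpow_neg hpos.le, ← div_eq_mul_inv,
    one_le_div (Real.rpow_pos_of_pos hpos _)]
  exact Real.rpow_le_rpow hpos.le (by linarith) hq

lemma sum_ballMajorant_add_dir_le (hd : 3 ≤ d) (hL : (d : ℝ) ≤ L) (x : Zd d) :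
    ∑ i, ∑ s, ballMajorant d L (x + dir d i s) ≤ 2 * d * ballMajorant d L x := by
  have hM : ((d : ℝ) + 6) ^ 2 ≤ 15 * L ^ 2 := by
    have : (3 : ℝ) ≤ d := by exact_mod_cast hd
    nlinarith
  have := sum_rpow_sqNorm_add_dir_le (by omega) hM x
  simp only [ballMajorant, ← Finset.mul_sum]
  rw [mul_left_comm]
  gcongr

lemma ballMajorant_le (hd : 2 ≤ d) (hL : 0 ≤ L) {x : Zd d} (hx : 0 < euclid x) :
    ballMajorant d L x ≤ (4 * L / euclid x) ^ (d - 2) := by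
  have hq : 0 ≤ ((d : ℝ) - 2) / 2 := by
    have : (2 : ℝ) ≤ d := by exact_mod_cast hd
    linarith
  have hS : 0 < sqNorm x := by rw [← euclid_sq]; positivity
  calc ballMajorant d L x
      ≤ (16 * L ^ 2) ^ (((d : ℝ) - 2) / 2) * sqNorm x ^ (-(((d : ℝ) - 2) / 2)) := by
        unfold ballMajorant
        gcongr ?_ * ?_
        exact Real.rpow_le_rpow_of_nonpos hS (le_add_of_nonneg_right (by positivity)) (by linarith)
    _ = ((4 * L / euclid x) ^ 2) ^ (((d : ℝ) - 2) / 2) := by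
        rw [Real.rpow_neg hS.le, ← div_eq_mul_inv, ← Real.div_rpow (by positivity) hS.le,
          div_pow, euclid_sq]
        ring_nf
    _ = (4 * L / euclid x) ^ (d - 2) := by
        rw [← Real.rpow_natCast_mul (by positivity), ← Real.rpow_natCast, Nat.cast_sub hd]
        ring_nf

end Majorant

lemma hitProbInfty_ballE_le {d : ℕ} {L : ℝ} (hd : 3 ≤ d) (hL : (d : ℝ) ≤ L) {x : Zd d}
    (hx : 0 < euclid x) : hitProbInfty d (ballE d L) x ≤ (4 * L / euclid x) ^ (d - 2) := by
  have hL0 : 0 < L := lt_of_lt_of_le (by positivity) hL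
  exact (hitProbInfty_le_of_superharmonic ballMajorant_nonneg
    (fun _ hy => one_le_ballMajorant (by omega) hL0 hy)
    (fun y _ => sum_ballMajorant_add_dir_le hd hL y) x).trans
    (ballMajorant_le (by omega) hL0.le hx)

/-- Entrance probability upper bound (Lemma 1.1, (1.6)): there is a dimension-independent
constant `c ≥ 1` with `P_x[H_{B(0,L)} < ∞] ≤ (c L / |x|)^{d-2} ∧ 1` for all `L ≥ d` and
`x ∈ ℤ^d` (the right-hand side being interpreted in `[0,∞]`, so that it equals `1` when
`x = 0`). -/
theorem hitting_prob_upper_bound :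
    ∃ c : ℝ, 1 ≤ c ∧ ∀ d : ℕ, 3 ≤ d → ∀ L : ℝ, (d : ℝ) ≤ L → ∀ x : Zd d,
      ENNReal.ofReal (hitProbInfty d (ballE d L) x) ≤
        min ((ENNReal.ofReal (c * L) / ENNReal.ofReal (euclid x)) ^ (d - 2)) 1 := by
  refine ⟨4, by norm_num, fun d hd L hL x =>
    le_min ?_ (ENNReal.ofReal_le_one.mpr (hitProbInfty_le_one x))⟩
  have hL0 : 0 < L := lt_of_lt_of_le (by positivity) hL
  rcases (euclid_nonneg x).eq_or_lt with hx | hx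
  · rw [← hx, ENNReal.ofReal_zero, ENNReal.div_zero (by simpa using hL0),
      ENNReal.top_pow (by omega)]
    exact le_top
  · rw [← ENNReal.ofReal_div_of_pos hx, ← ENNReal.ofReal_pow (by positivity)]
    exact ENNReal.ofReal_le_ofReal (hitProbInfty_ballE_le hd hL hx)
end

section
/- For all real numbers a, b ≥ 0, one has √(a² + b²) · log(1 + √(a² + b²)) ≤ a·log(1 + a) + b·log(1 + b). -/
/-! With `r = √(a² + b²)`, weighting `log (1 + r)` by `a² / r² + b² / r² = 1` reduces the claim to
`(a / r) · log (1 + r) ≤ log (1 + a)` (and likewise for `b`). This is Bernoulli's inequality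
`(1 + r) ^ t ≤ 1 + t r` for `t = a / r ∈ [0, 1]`, after taking logarithms. -/

open Real

lemma mul_log_one_add_le_log_one_add_mul {t r : ℝ} (ht₀ : 0 ≤ t) (ht₁ : t ≤ 1) (hr : -1 < r) :
    t * log (1 + r) ≤ log (1 + t * r) := by
  have hpos : 0 < 1 + r := by linarith
  calc t * log (1 + r) = log ((1 + r) ^ t) := (log_rpow hpos t).symm
    _ ≤ log (1 + t * r) :=
      log_le_log (rpow_pos_of_pos hpos t) (rpow_one_add_le_one_add_mul_self hr.le ht₀ ht₁)

lemma sq_mul_log_one_add_le {a r : ℝ} (ha : 0 ≤ a) (har : a ≤ r) (hr : 0 < r) :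
    a ^ 2 * log (1 + r) ≤ r * (a * log (1 + a)) := by
  have hbernoulli : a / r * log (1 + r) ≤ log (1 + a) := by
    simpa [div_mul_cancel₀ a hr.ne'] using
      mul_log_one_add_le_log_one_add_mul (div_nonneg ha hr.le) ((div_le_one hr).2 har)
        (by linarith : -1 < r)
  calc a ^ 2 * log (1 + r) = r * (a * (a / r * log (1 + r))) := by field_simp
    _ ≤ r * (a * log (1 + a)) := by gcongr

/-- Lemma A.1: for all `a, b ≥ 0`,
`√(a² + b²) log(1 + √(a² + b²)) ≤ a log(1 + a) + b log(1 + b)`. -/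
theorem sqrt_sq_add_sq_log_le (a b : ℝ) (ha : 0 ≤ a) (hb : 0 ≤ b) :
    Real.sqrt (a ^ 2 + b ^ 2) * Real.log (1 + Real.sqrt (a ^ 2 + b ^ 2)) ≤
      a * Real.log (1 + a) + b * Real.log (1 + b) := by
  set r := √(a ^ 2 + b ^ 2)
  have hrhs : 0 ≤ a * log (1 + a) + b * log (1 + b) := by
    have := log_nonneg (by linarith : (1 : ℝ) ≤ 1 + a)
    have := log_nonneg (by linarith : (1 : ℝ) ≤ 1 + b)
    positivity
  have hr₀ : 0 ≤ r := sqrt_nonneg _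
  rcases hr₀.eq_or_lt with hr | hr
  · rwa [← hr, zero_mul]
  have hr_sq : r ^ 2 = a ^ 2 + b ^ 2 := sq_sqrt (by positivity)
  have har : a ≤ r := le_sqrt_of_sq_le (by nlinarith)
  have hbr : b ≤ r := le_sqrt_of_sq_le (by nlinarith)
  refine le_of_mul_le_mul_left ?_ hr
  calc r * (r * log (1 + r)) = a ^ 2 * log (1 + r) + b ^ 2 * log (1 + r) := by
        rw [← mul_assoc, ← sq, hr_sq, add_mul]
    _ ≤ r * (a * log (1 + a)) + r * (b * log (1 + b)) :=
        add_le_add (sq_mul_log_one_add_le ha har hr) (sq_mul_log_one_add_le hb hbr hr)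
    _ = r * (a * log (1 + a) + b * log (1 + b)) := by ring
end

section
/- Let Γ be a connected graph with at most countable vertex set E, and consider an irreducible nearest-neighbor Markov chain on E (at each step it stays put or moves to an adjacent vertex) whose transition probability p satisfies p(x,y) > 0 whenever {x,y} is an edge. Suppose ∅ ≠ U_1 ⊆ U_2 ⊆ U_3 are finite strict subsets of E with U_3 connected, and u is a bounded nonnegative function on Ū_3 which is harmonic in U_3. Then max_{U_1} u ≤ K · min_{U_1} u, where K = max_{x,y ∈ U_1} max_{z ∈ ∂_int U_2} G_{U_3}(x,z)/G_{U_3}(y,z). -/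
-- `transPow p n x y` is the `n`-step transition probability of the chain with one-step
-- transition probability `p`.
open Classical in
noncomputable def transPow {E : Type*} (p : E → E → ℝ) : ℕ → E → E → ℝ
  | 0, x, y => if x = y then 1 else 0
  | n + 1, x, y => ∑' z, p x z * transPow p n z y

-- `stayProb p U k x y` is the probability that the chain started at `x` is at `y` at
-- time `k` while having stayed inside `U` at all times `0, …, k`.
open Classical in
noncomputable def stayProb {E : Type*} (p : E → E → ℝ) (U : Set E) : ℕ → E → E → ℝ
  | 0, x, y => if x = y ∧ x ∈ U then 1 else 0
  | n + 1, x, y => if x ∈ U then ∑' z, p x z * stayProb p U n z y else 0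

/-- The Green function of the chain killed outside `U`:
`G_U(x,y) = Σ_k P_x[X_k = y, T_U > k]`. -/
noncomputable def greenKilled {E : Type*} (p : E → E → ℝ) (U : Set E) (x y : E) : ℝ :=
  ∑' k : ℕ, stayProb p U k x y

/-!
Since `U₃` is finite and the chain can leave it, the matrix `Q` of the chain killed outside `U₃`
has summable powers, and `𝒢 = ∑ Qⁿ = (1 - Q)⁻¹` is the killed Green function. A harmonic `u`
satisfies `u = Q u + c` on `U₃`, where `c ≥ 0` is the part of the mean carried out of `U₃`; hence
`u = 𝒢 c`. Splitting paths at their last visit to `U₂` rewrites this, for `x ∈ U₂`, as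
`u x = ∑_z 𝒢(x, z) w(z)` with a charge `w ≥ 0` that does not depend on `x` and lives on `∂_int U₂`.
Comparing these sums for `x` and `y` term by term gives the bound, since `𝒢(y, z) > 0` by the
connectedness of `U₃`.
-/

open Finset Matrix

theorem summable_of_shift_le_mul {f : ℕ → ℝ} {N : ℕ} {ρ : ℝ} (hf : ∀ n, 0 ≤ f n) (hρ : ρ < 1)
    (hshift : ∀ n, f (n + N) ≤ ρ * f n) : Summable f := by
  refine summable_of_sum_range_le hf (c := (∑ i ∈ range N, f i) / (1 - ρ)) fun n => ?_
  have hsplit := sum_range_add f N n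
  have hshifted : ∑ i ∈ range n, f (N + i) ≤ ρ * ∑ i ∈ range n, f i := by
    rw [mul_sum]
    exact sum_le_sum fun i _ => by rw [add_comm]; exact hshift i
  have hmono : ∑ i ∈ range n, f i ≤ ∑ i ∈ range (N + n), f i :=
    sum_le_sum_of_subset_of_nonneg (range_subset_range.mpr (Nat.le_add_left n N))
      fun i _ _ => hf i
  rw [le_div_iff₀ (by linarith)]
  linarith

theorem summable_pow_of_norm_pow_lt_one {R : Type*} [NormedRing R] [CompleteSpace R] {x : R}
    {N : ℕ} (h : ‖x ^ N‖ < 1) : Summable (x ^ ·) :=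
  Summable.of_norm <| summable_of_shift_le_mul (fun _ => norm_nonneg _) h fun n => by
    rw [pow_add]
    exact (norm_mul_le _ _).trans_eq (mul_comm _ _)

theorem sum_mul_le_tsum_mul {E : Type*} {q u : E → ℝ} {C : ℝ} (hq : ∀ y, 0 ≤ q y)
    (hqs : Summable q) (hu : ∀ y, q y ≠ 0 → 0 ≤ u y ∧ u y ≤ C) (F : Finset E) :
    ∑ y ∈ F, q y * u y ≤ ∑' y, q y * u y := by
  have hterm : ∀ y, 0 ≤ q y * u y ∧ q y * u y ≤ C * q y := fun y => by
    by_cases hy : q y = 0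
    · simp [hy]
    · obtain ⟨hu0, huC⟩ := hu y hy
      exact ⟨mul_nonneg (hq y) hu0, by nlinarith [hq y]⟩
  exact Summable.sum_le_tsum F (fun y _ => (hterm y).1)
    ((hqs.mul_left C).of_nonneg_of_le (fun y => (hterm y).1) fun y => (hterm y).2)

theorem sum_mul_le_mul_sum_of_div_le {ι : Type*} (s : Finset ι) {f g w : ι → ℝ} {K : ℝ}
    (hw : ∀ z ∈ s, 0 ≤ w z) (h : ∀ z ∈ s, w z ≠ 0 → 0 < g z ∧ f z / g z ≤ K) :
    ∑ z ∈ s, f z * w z ≤ K * ∑ z ∈ s, g z * w z := by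
  rw [mul_sum]
  refine sum_le_sum fun z hz => ?_
  by_cases hwz : w z = 0
  · simp [hwz]
  obtain ⟨hg, hfg⟩ := h z hz hwz
  rw [← mul_assoc]
  exact mul_le_mul_of_nonneg_right ((div_le_iff₀ hg).mp hfg) (hw z hz)

theorem IsIdempotentElem.mul_eq_mul_mul_mul_of_inverses {R : Type*} [Ring R] {D G Q H : R}
    (hD : IsIdempotentElem D) (hG : G * (1 - Q) = 1) (hH : (1 - Q * (1 - D)) * H = 1) :
    D * G = D * G * D * H := by
  have hGQ : G = 1 + G * Q := by rw [← hG]; noncomm_ring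
  have hright : D * G * (1 - Q * (1 - D)) = D * G * D :=
    calc D * G * (1 - Q * (1 - D)) = D * (G * (1 - Q)) + D * (G * Q) * D := by noncomm_ring
      _ = D * D + D * (G * Q) * D := by rw [hG, mul_one, hD.eq]
      _ = D * (1 + G * Q) * D := by noncomm_ring
      _ = D * G * D := by rw [← hGQ]
  calc D * G = D * G * ((1 - Q * (1 - D)) * H) := by rw [hH, mul_one]
    _ = D * G * D * H := by rw [← mul_assoc, hright]

namespace Matrix

variable {ι : Type*} [Fintype ι] [DecidableEq ι] {Q B : Matrix ι ι ℝ}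

theorem tsum_pow_apply (hs : Summable (Q ^ ·)) (i j : ι) :
    (∑' n, Q ^ n) i j = ∑' n, (Q ^ n) i j :=
  (congrFun (tsum_apply (f := fun n => (Q ^ n : ι → ι → ℝ)) hs (x := i)) j).trans
    (tsum_apply (Pi.summable.mp hs i))

theorem tsum_pow_apply_nonneg (hQ : ∀ i j, 0 ≤ Q i j) (hs : Summable (Q ^ ·)) (i j : ι) :
    0 ≤ (∑' n, Q ^ n) i j :=
  (tsum_pow_apply hs i j).symm ▸ tsum_nonneg fun n => pow_apply_nonneg hQ n i j

theorem pow_apply_le_pow_apply (hB : ∀ i j, 0 ≤ B i j) (hBQ : ∀ i j, B i j ≤ Q i j) (n : ℕ)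
    (i j : ι) : (B ^ n) i j ≤ (Q ^ n) i j := by
  induction n generalizing i with
  | zero => rfl
  | succ n ih =>
    rw [pow_succ', pow_succ', mul_apply, mul_apply]
    exact sum_le_sum fun k _ =>
      mul_le_mul (hBQ i k) (ih k) (pow_apply_nonneg hB n k j) ((hB i k).trans (hBQ i k))

theorem summable_pow_of_le (hB : ∀ i j, 0 ≤ B i j) (hBQ : ∀ i j, B i j ≤ Q i j)
    (hs : Summable (Q ^ ·)) : Summable (B ^ ·) :=
  Pi.summable.mpr fun i => Pi.summable.mpr fun j =>
    (Pi.summable.mp (Pi.summable.mp hs i) j).of_nonneg_of_le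
      (fun n => pow_apply_nonneg hB n i j) fun n => pow_apply_le_pow_apply hB hBQ n i j

theorem exists_pow_apply_pos (hQ : ∀ i j, 0 ≤ Q i j) {i j : ι}
    (h : Relation.ReflTransGen (fun a b => 0 < Q a b) i j) : ∃ n, 0 < (Q ^ n) i j := by
  induction h with
  | refl => exact ⟨0, by simp⟩
  | tail _ hbc ih =>
    obtain ⟨n, hn⟩ := ih
    refine ⟨n + 1, ?_⟩
    rw [pow_succ, mul_apply]
    exact (mul_pos hn hbc).trans_le <| single_le_sum (f := fun k => (Q ^ n) i k * Q k _)
      (fun k _ => mul_nonneg (pow_apply_nonneg hQ n _ k) (hQ k _)) (mem_univ _)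

theorem antitone_sum_pow_apply (hQ : ∀ i j, 0 ≤ Q i j) (hrow : ∀ i, ∑ j, Q i j ≤ 1) (i : ι) :
    Antitone fun n => ∑ j, (Q ^ n) i j := by
  refine antitone_nat_of_succ_le fun n => ?_
  simp_rw [pow_succ, mul_apply]
  rw [sum_comm]
  refine sum_le_sum fun k _ => ?_
  rw [← mul_sum]
  exact mul_le_of_le_one_right (pow_apply_nonneg hQ n i k) (hrow k)

theorem sum_pow_apply_le_one (hQ : ∀ i j, 0 ≤ Q i j) (hrow : ∀ i, ∑ j, Q i j ≤ 1) (n : ℕ)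
    (i : ι) : ∑ j, (Q ^ n) i j ≤ 1 :=
  (antitone_sum_pow_apply hQ hrow i (Nat.zero_le n)).trans_eq (by simp [one_apply])

theorem summable_pow_of_sum_pow_apply_lt_one (hQ : ∀ i j, 0 ≤ Q i j) {N : ℕ}
    (hN : ∀ i, ∑ j, (Q ^ N) i j < 1) : Summable (Q ^ ·) := by
  let _ := Matrix.linftyOpNormedRing (n := ι) (α := ℝ)
  let _ := Matrix.linftyOpNormedSpace (m := ι) (n := ι) (R := ℝ) (α := ℝ)
  have : CompleteSpace (Matrix ι ι ℝ) := FiniteDimensional.complete ℝ _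
  refine summable_pow_of_norm_pow_lt_one (N := N) ?_
  rw [linfty_opNorm_def, ← NNReal.coe_one, NNReal.coe_lt_coe, Finset.sup_lt_iff zero_lt_one]
  intro i _
  rw [← NNReal.coe_lt_coe, NNReal.coe_sum]
  simpa [Real.norm_of_nonneg (pow_apply_nonneg hQ N i _)] using hN i

theorem summable_pow_of_forall_exists_sum_pow_apply_lt_one (hQ : ∀ i j, 0 ≤ Q i j)
    (hrow : ∀ i, ∑ j, Q i j ≤ 1) (h : ∀ i, ∃ n, ∑ j, (Q ^ n) i j < 1) : Summable (Q ^ ·) := by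
  choose n hn using h
  exact summable_pow_of_sum_pow_apply_lt_one hQ (N := univ.sup n) fun i =>
    (antitone_sum_pow_apply hQ hrow i (le_sup (mem_univ i))).trans_lt (hn i)

theorem eq_tsum_pow_mulVec_of_eq_mulVec_add (hs : Summable (Q ^ ·)) {v c : ι → ℝ}
    (hv : v = Q *ᵥ v + c) : v = (∑' n, Q ^ n) *ᵥ c := by
  rw [show c = (1 - Q) *ᵥ v by rw [sub_mulVec, one_mulVec]; exact eq_sub_of_add_eq' hv.symm,
    mulVec_mulVec, hs.tsum_pow_mul_one_sub, one_mulVec]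

theorem tsum_pow_mulVec_apply_ne_zero (hs : Summable (B ^ ·)) {c : ι → ℝ} {z : ι}
    (hz : ((∑' n, B ^ n) *ᵥ c) z ≠ 0) : c z ≠ 0 ∨ ∃ k, B z k ≠ 0 := by
  have hH : ∑' n, B ^ n = 1 + B * ∑' n, B ^ n := by
    rw [← hs.one_sub_mul_tsum_pow]; noncomm_ring
  by_contra! h
  rw [hH, add_mulVec, one_mulVec, ← mulVec_mulVec, Pi.add_apply, h.1, zero_add] at hz
  exact hz (sum_eq_zero fun k _ => mul_eq_zero_of_left (h.2 k) _)

theorem isIdempotentElem_diagonal_indicator (S : Set ι) :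
    IsIdempotentElem (diagonal (S.indicator (1 : ι → ℝ))) := by
  rw [IsIdempotentElem, diagonal_mul_diagonal]
  congr 1
  ext i
  by_cases hi : i ∈ S <;> simp [hi]

theorem diagonal_indicator_mulVec (S : Set ι) (f : ι → ℝ) :
    diagonal (S.indicator 1) *ᵥ f = S.indicator f := by
  ext z
  by_cases hz : z ∈ S <;> simp [mulVec_diagonal, hz]

noncomputable def killedOnEntry (Q : Matrix ι ι ℝ) (S : Set ι) : Matrix ι ι ℝ :=
  Q * (1 - diagonal (S.indicator 1))

theorem killedOnEntry_apply_of_mem {S : Set ι} {j : ι} (hj : j ∈ S) (i : ι) :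
    Q.killedOnEntry S i j = 0 := by
  simp [killedOnEntry, mul_sub, mul_diagonal, hj]

theorem killedOnEntry_apply_of_notMem {S : Set ι} {j : ι} (hj : j ∉ S) (i : ι) :
    Q.killedOnEntry S i j = Q i j := by
  simp [killedOnEntry, mul_sub, mul_diagonal, hj]

theorem killedOnEntry_nonneg (hQ : ∀ i j, 0 ≤ Q i j) (S : Set ι) (i j : ι) :
    0 ≤ Q.killedOnEntry S i j := by
  by_cases hj : j ∈ S
  · rw [killedOnEntry_apply_of_mem hj]
  · rw [killedOnEntry_apply_of_notMem hj]
    exact hQ i j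

theorem killedOnEntry_le (hQ : ∀ i j, 0 ≤ Q i j) (S : Set ι) (i j : ι) :
    Q.killedOnEntry S i j ≤ Q i j := by
  by_cases hj : j ∈ S
  · rw [killedOnEntry_apply_of_mem hj]
    exact hQ i j
  · rw [killedOnEntry_apply_of_notMem hj]

theorem summable_pow_killedOnEntry (hQ : ∀ i j, 0 ≤ Q i j) (hs : Summable (Q ^ ·)) (S : Set ι) :
    Summable (Q.killedOnEntry S ^ ·) :=
  summable_pow_of_le (killedOnEntry_nonneg hQ S) (killedOnEntry_le hQ S) hs

/-- Last-exit decomposition: a path of the killed chain from `i ∈ S` is split at its last visit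
to `S`. -/
theorem tsum_pow_mulVec_apply_of_mem (hQ : ∀ i j, 0 ≤ Q i j) (hs : Summable (Q ^ ·))
    {S : Set ι} (c : ι → ℝ) {i : ι} (hi : i ∈ S) :
    ((∑' n, Q ^ n) *ᵥ c) i =
      ∑ z, (∑' n, Q ^ n) i z * S.indicator ((∑' n, Q.killedOnEntry S ^ n) *ᵥ c) z := by
  have hlast := (isIdempotentElem_diagonal_indicator S).mul_eq_mul_mul_mul_of_inverses
    hs.tsum_pow_mul_one_sub (summable_pow_killedOnEntry hQ hs S).one_sub_mul_tsum_pow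
  calc ((∑' n, Q ^ n) *ᵥ c) i = (diagonal (S.indicator 1) *ᵥ ((∑' n, Q ^ n) *ᵥ c)) i := by
        rw [diagonal_indicator_mulVec, Set.indicator_of_mem hi]
    _ = (diagonal (S.indicator 1) *ᵥ ((∑' n, Q ^ n) *ᵥ
          (diagonal (S.indicator 1) *ᵥ ((∑' n, Q.killedOnEntry S ^ n) *ᵥ c)))) i := by
        rw [mulVec_mulVec, hlast]
        simp only [mulVec_mulVec, mul_assoc]
    _ = _ := by
        rw [diagonal_indicator_mulVec, diagonal_indicator_mulVec, Set.indicator_of_mem hi]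
        rfl

theorem exists_potential_of_eq_mulVec_add (hQ : ∀ i j, 0 ≤ Q i j) (hs : Summable (Q ^ ·))
    {v c : ι → ℝ} (hc : ∀ i, 0 ≤ c i) (hv : v = Q *ᵥ v + c) (S : Set ι) :
    ∃ w : ι → ℝ, (∀ z, 0 ≤ w z) ∧ (∀ z, w z ≠ 0 → z ∈ S ∧ (c z ≠ 0 ∨ ∃ k ∉ S, Q z k ≠ 0)) ∧
      ∀ i ∈ S, v i = ∑ z, (∑' n, Q ^ n) i z * w z := by
  have hBs := summable_pow_killedOnEntry hQ hs S
  refine ⟨S.indicator ((∑' n, Q.killedOnEntry S ^ n) *ᵥ c),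
    fun z => S.indicator_nonneg (fun z _ => sum_nonneg fun k _ =>
      mul_nonneg (tsum_pow_apply_nonneg (killedOnEntry_nonneg hQ S) hBs z k) (hc k)) z,
    fun z hz => ?_, fun i hi => ?_⟩
  · have hzS : z ∈ S := Set.mem_of_indicator_ne_zero hz
    rw [Set.indicator_of_mem hzS] at hz
    refine ⟨hzS, (tsum_pow_mulVec_apply_ne_zero hBs hz).imp_right fun ⟨k, hk⟩ => ?_⟩
    have hkS : k ∉ S := fun hkS => hk (killedOnEntry_apply_of_mem hkS z)
    rw [killedOnEntry_apply_of_notMem hkS] at hk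
    exact ⟨k, hkS, hk⟩
  · rw [eq_tsum_pow_mulVec_of_eq_mulVec_add hs hv, tsum_pow_mulVec_apply_of_mem hQ hs c hi]

end Matrix

section KilledChain

variable {E : Type*} {p : E → E → ℝ} {F : Finset E}

def killedMatrix (p : E → E → ℝ) (F : Finset E) : Matrix F F ℝ := of fun a b => p a b

theorem killedMatrix_nonneg (hp_nonneg : ∀ x y, 0 ≤ p x y) (a b : F) :
    0 ≤ killedMatrix p F a b :=
  hp_nonneg a b

theorem sum_killedMatrix_apply_le_one (hp_nonneg : ∀ x y, 0 ≤ p x y)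
    (hp_sum : ∀ x, HasSum (p x) 1) (a : F) : ∑ b, killedMatrix p F a b ≤ 1 :=
  (sum_coe_sort F (p a)).trans_le (sum_le_hasSum F (fun b _ => hp_nonneg a b) (hp_sum a))

theorem reflTransGen_killedMatrix_pos {G : SimpleGraph E}
    (hp_pos : ∀ x y, G.Adj x y → 0 < p x y) {y z : E}
    (h : Relation.ReflTransGen (fun a b => a ∈ (F : Set E) ∧ b ∈ (F : Set E) ∧ G.Adj a b) y z)
    (hy : y ∈ F) (hz : z ∈ F) :
    Relation.ReflTransGen (fun a b : F => 0 < killedMatrix p F a b) ⟨y, hy⟩ ⟨z, hz⟩ := by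
  induction h with
  | refl => rfl
  | tail _ hbc ih => exact (ih hbc.1).tail (hp_pos _ _ hbc.2.2)

theorem stayProb_eq_zero_of_notMem {U : Set E} {x : E} (hx : x ∉ U) (n : ℕ) (y : E) :
    stayProb p U n x y = 0 := by
  cases n <;> simp [stayProb, hx]

variable [DecidableEq E]

theorem stayProb_eq_killedMatrix_pow (n : ℕ) (a b : F) :
    stayProb p F n a b = (killedMatrix p F ^ n) a b := by
  induction n generalizing a with
  | zero =>
    rw [stayProb, pow_zero, one_apply]
    simp
  | succ n ih =>
    rw [stayProb, if_pos (mem_coe.mpr a.2), pow_succ', mul_apply,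
      tsum_eq_sum (s := F) fun z hz => by
        rw [stayProb_eq_zero_of_notMem (by simpa using hz), mul_zero], ← sum_coe_sort F]
    exact sum_congr rfl fun z _ => by rw [ih]; rfl

theorem greenKilled_eq_tsum_pow_apply (hs : Summable (killedMatrix p F ^ ·)) (a b : F) :
    greenKilled p F a b = (∑' n, killedMatrix p F ^ n) a b := by
  simp_rw [greenKilled, stayProb_eq_killedMatrix_pow, tsum_pow_apply hs]

theorem sum_killedMatrix_apply_lt_one_of_notMem (hp_nonneg : ∀ x y, 0 ≤ p x y)
    (hp_sum : ∀ x, HasSum (p x) 1) (a : F) {b : E} (hb : b ∉ F) (hab : 0 < p a b) :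
    ∑ c, killedMatrix p F a c < 1 := by
  have hle := sum_le_hasSum (insert b F) (fun c _ => hp_nonneg a c) (hp_sum a)
  rw [sum_insert hb, ← sum_coe_sort F (p a)] at hle
  exact lt_of_lt_of_le (lt_add_of_pos_left _ hab) hle

theorem exists_sum_killedMatrix_pow_apply_lt_one (hp_nonneg : ∀ x y, 0 ≤ p x y)
    (hp_sum : ∀ x, HasSum (p x) 1) {G : SimpleGraph E} (hp_pos : ∀ x y, G.Adj x y → 0 < p x y)
    {x o : E} (q : G.Walk x o) (ho : o ∉ F) (hx : x ∈ F) :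
    ∃ n, ∑ b, (killedMatrix p F ^ n) ⟨x, hx⟩ b < 1 := by
  induction q with
  | nil => exact absurd hx ho
  | @cons x b o hxb q ih =>
    have hrow := sum_killedMatrix_apply_le_one (F := F) hp_nonneg hp_sum
    by_cases hb : b ∈ F
    · obtain ⟨n, hn⟩ := ih ho hb
      refine ⟨n + 1, ?_⟩
      calc ∑ c, (killedMatrix p F ^ (n + 1)) ⟨x, hx⟩ c
          = ∑ k, killedMatrix p F ⟨x, hx⟩ k * ∑ c, (killedMatrix p F ^ n) k c := by
            simp_rw [pow_succ', mul_apply, mul_sum]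
            exact sum_comm
        _ < ∑ k, killedMatrix p F ⟨x, hx⟩ k := by
            refine sum_lt_sum (fun k _ => mul_le_of_le_one_right (hp_nonneg _ _)
              (sum_pow_apply_le_one (killedMatrix_nonneg hp_nonneg) hrow n k)) ?_
            exact ⟨⟨b, hb⟩, mem_univ _, mul_lt_of_lt_one_right (hp_pos _ _ hxb) hn⟩
        _ ≤ 1 := hrow _
    · refine ⟨1, ?_⟩
      rw [pow_one]
      exact sum_killedMatrix_apply_lt_one_of_notMem hp_nonneg hp_sum _ hb (hp_pos _ _ hxb)

theorem summable_killedMatrix_pow (hp_nonneg : ∀ x y, 0 ≤ p x y)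
    (hp_sum : ∀ x, HasSum (p x) 1) {G : SimpleGraph E} (hp_pos : ∀ x y, G.Adj x y → 0 < p x y)
    (hconn : G.Connected) (hF : (F : Set E) ≠ Set.univ) : Summable (killedMatrix p F ^ ·) := by
  obtain ⟨o, ho⟩ := (Set.ne_univ_iff_exists_notMem _).mp hF
  exact summable_pow_of_forall_exists_sum_pow_apply_lt_one (killedMatrix_nonneg hp_nonneg)
    (sum_killedMatrix_apply_le_one hp_nonneg hp_sum) fun a =>
      exists_sum_killedMatrix_pow_apply_lt_one hp_nonneg hp_sum hp_pos
        (hconn.preconnected a o).some ho a.2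

theorem greenKilled_pos (hp_nonneg : ∀ x y, 0 ≤ p x y) (hs : Summable (killedMatrix p F ^ ·))
    {G : SimpleGraph E} (hp_pos : ∀ x y, G.Adj x y → 0 < p x y) {y z : E}
    (h : Relation.ReflTransGen (fun a b => a ∈ (F : Set E) ∧ b ∈ (F : Set E) ∧ G.Adj a b) y z)
    (hy : y ∈ F) (hz : z ∈ F) : 0 < greenKilled p F y z := by
  obtain ⟨n, hn⟩ := exists_pow_apply_pos (killedMatrix_nonneg hp_nonneg)
    (reflTransGen_killedMatrix_pos hp_pos h hy hz)
  rw [show y = (⟨y, hy⟩ : F) from rfl, show z = (⟨z, hz⟩ : F) from rfl,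
    greenKilled_eq_tsum_pow_apply hs, tsum_pow_apply hs]
  exact hn.trans_le <| (Pi.summable.mp (Pi.summable.mp hs _) _).le_tsum n fun k _ =>
    pow_apply_nonneg (killedMatrix_nonneg hp_nonneg) k _ _

theorem exists_greenKilled_potential (hp_nonneg : ∀ x y, 0 ≤ p x y)
    (hp_sum : ∀ x, HasSum (p x) 1) (hs : Summable (killedMatrix p F ^ ·)) {u : E → ℝ} {C : ℝ}
    (hu : ∀ x ∈ F, ∀ y, p x y ≠ 0 → 0 ≤ u y ∧ u y ≤ C)
    (hu_harm : ∀ x ∈ F, ∑' y, p x y * u y = u x) {S : Set E} (hS : S ⊆ F) :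
    ∃ w : F → ℝ, (∀ z, 0 ≤ w z) ∧ (∀ z : F, w z ≠ 0 → (z : E) ∈ S ∧ ∃ y ∉ S, p z y ≠ 0) ∧
      ∀ x : F, (x : E) ∈ S → u x = ∑ z : F, greenKilled p F x z * w z := by
  set v : F → ℝ := fun a => u a
  set c := v - killedMatrix p F *ᵥ v with hc
  have hQv : ∀ a : F, (killedMatrix p F *ᵥ v) a = ∑ y ∈ F, p a y * u y := fun a =>
    sum_coe_sort F fun y => p a y * u y
  have hc0 : ∀ a, 0 ≤ c a := fun a => by
    rw [hc, Pi.sub_apply, hQv, sub_nonneg]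
    change _ ≤ u a
    rw [← hu_harm a a.2]
    exact sum_mul_le_tsum_mul (hp_nonneg a) (hp_sum a).summable (hu a a.2) F
  have hc_supp : ∀ a, c a ≠ 0 → ∃ y ∉ F, p a y ≠ 0 := fun a ha => by
    by_contra! h
    refine ha ?_
    rw [hc, Pi.sub_apply, hQv, sub_eq_zero]
    change u a = _
    rw [← hu_harm a a.2]
    exact tsum_eq_sum fun y hy => by rw [h y hy, zero_mul]
  obtain ⟨w, hw0, hw_supp, hrep⟩ := exists_potential_of_eq_mulVec_add
    (killedMatrix_nonneg hp_nonneg) hs hc0 (add_sub_cancel _ _).symm {a : F | (a : E) ∈ S}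
  refine ⟨w, hw0, fun z hz => ?_, fun x hx => ?_⟩
  · obtain ⟨hzS, hcz | ⟨k, hkS, hk⟩⟩ := hw_supp z hz
    · obtain ⟨y, hyF, hy⟩ := hc_supp z hcz
      exact ⟨hzS, y, fun hyS => hyF (hS hyS), hy⟩
    · exact ⟨hzS, k, hkS, hk⟩
  · simp_rw [greenKilled_eq_tsum_pow_apply hs]
    exact hrep x hx

end KilledChain

theorem harnack_via_killed_green_general
    {E : Type*} (G : SimpleGraph E) (hconn : G.Connected)
    (p : E → E → ℝ)
    (hp_nonneg : ∀ x y, 0 ≤ p x y)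
    (hp_sum : ∀ x, HasSum (p x) 1)
    (hp_supp : ∀ x y, p x y ≠ 0 → x = y ∨ G.Adj x y)
    (hp_pos : ∀ x y, G.Adj x y → 0 < p x y)
    (U₁ U₂ U₃ : Set E)
    (h12 : U₁ ⊆ U₂) (h23 : U₂ ⊆ U₃)
    (h3fin : U₃.Finite) (h3strict : U₃ ≠ Set.univ)
    (h3conn : ∀ x ∈ U₃, ∀ y ∈ U₃,
      Relation.ReflTransGen (fun a b => a ∈ U₃ ∧ b ∈ U₃ ∧ G.Adj a b) x y)
    (u : E → ℝ)
    (hu_bdd : ∃ C : ℝ, ∀ x ∈ U₃ ∪ {x | ∃ y ∈ U₃, G.Adj x y}, |u x| ≤ C)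
    (hu_nonneg : ∀ x ∈ U₃ ∪ {x | ∃ y ∈ U₃, G.Adj x y}, 0 ≤ u x)
    (hu_harm : ∀ x ∈ U₃, (∑' y, p x y * u y) = u x) :
    ∀ x ∈ U₁, ∀ y ∈ U₁,
      u x ≤ sSup {r : ℝ | ∃ a ∈ U₁, ∃ b ∈ U₁,
          ∃ z ∈ {z | z ∈ U₂ ∧ ∃ w, w ∉ U₂ ∧ G.Adj z w},
          r = greenKilled p U₃ a z / greenKilled p U₃ b z} * u y := by
  classical
  intro x hx y hy
  obtain ⟨F, rfl⟩ := h3fin.exists_finset_coe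
  obtain ⟨C, hC⟩ := hu_bdd
  have hu : ∀ a ∈ F, ∀ b, p a b ≠ 0 → 0 ≤ u b ∧ u b ≤ C := fun a ha b hab => by
    have hb : b ∈ (F : Set E) ∪ {x | ∃ y ∈ (F : Set E), G.Adj x y} :=
      (hp_supp a b hab).elim (fun h => Or.inl (h ▸ ha)) fun h => Or.inr ⟨a, ha, h.symm⟩
    exact ⟨hu_nonneg b hb, (le_abs_self _).trans (hC b hb)⟩
  have hs := summable_killedMatrix_pow hp_nonneg hp_sum hp_pos hconn h3strict
  obtain ⟨w, hw0, hw_supp, hrep⟩ :=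
    exists_greenKilled_potential hp_nonneg hp_sum hs hu hu_harm h23
  have hxF : x ∈ F := h23 (h12 hx)
  have hyF : y ∈ F := h23 (h12 hy)
  rw [hrep ⟨x, hxF⟩ (h12 hx), hrep ⟨y, hyF⟩ (h12 hy)]
  refine sum_mul_le_mul_sum_of_div_le _ (fun z _ => hw0 z) fun z _ hwz => ?_
  obtain ⟨hz2, b, hb, hpb⟩ := hw_supp z hwz
  have hzb : G.Adj z b := (hp_supp z b hpb).resolve_left fun h => hb (h ▸ hz2)
  refine ⟨greenKilled_pos hp_nonneg hs hp_pos (h3conn y hyF z z.2) hyF z.2,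
    le_csSup ?_ ⟨x, hx, y, hy, z, ⟨hz2, b, hb, hzb⟩, rfl⟩⟩
  refine (Set.finite_range fun t : F × F × F =>
    greenKilled p F t.1 t.2.2 / greenKilled p F t.2.1 t.2.2).bddAbove.mono ?_
  rintro r ⟨a, ha, b, hb, z, hz, rfl⟩
  exact ⟨(⟨a, h23 (h12 ha)⟩, ⟨b, h23 (h12 hb)⟩, ⟨z, h23 hz.1⟩), rfl⟩

/-- Lemma A.2: Harnack-type bound via killed Green functions, for an irreducible elliptic
nearest-neighbor Markov chain on a connected countable graph. If `∅ ≠ U₁ ⊆ U₂ ⊆ U₃` are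
finite strict subsets of the vertex set, `U₃` is connected, and `u` is a bounded
nonnegative function on `Ū₃` harmonic in `U₃`, then `max_{U₁} u ≤ K min_{U₁} u` with
`K = max_{x,y ∈ U₁} max_{z ∈ ∂_int U₂} G_{U₃}(x,z)/G_{U₃}(y,z)`. -/
theorem harnack_via_killed_green
    {E : Type*} [Countable E] (G : SimpleGraph E) (hconn : G.Connected)
    (p : E → E → ℝ)
    (hp_nonneg : ∀ x y, 0 ≤ p x y)
    (hp_sum : ∀ x, HasSum (p x) 1)
    (hp_supp : ∀ x y, p x y ≠ 0 → x = y ∨ G.Adj x y)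
    (hp_pos : ∀ x y, G.Adj x y → 0 < p x y)
    (h_irred : ∀ x y, ∃ n : ℕ, 0 < transPow p n x y)
    (U₁ U₂ U₃ : Set E)
    (h1ne : U₁.Nonempty) (h12 : U₁ ⊆ U₂) (h23 : U₂ ⊆ U₃)
    (h3fin : U₃.Finite) (h3strict : U₃ ≠ Set.univ)
    (h3conn : ∀ x ∈ U₃, ∀ y ∈ U₃,
      Relation.ReflTransGen (fun a b => a ∈ U₃ ∧ b ∈ U₃ ∧ G.Adj a b) x y)
    (u : E → ℝ)
    (hu_bdd : ∃ C : ℝ, ∀ x ∈ U₃ ∪ {x | ∃ y ∈ U₃, G.Adj x y}, |u x| ≤ C)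
    (hu_nonneg : ∀ x ∈ U₃ ∪ {x | ∃ y ∈ U₃, G.Adj x y}, 0 ≤ u x)
    (hu_harm : ∀ x ∈ U₃, (∑' y, p x y * u y) = u x) :
    ∀ x ∈ U₁, ∀ y ∈ U₁,
      u x ≤ sSup {r : ℝ | ∃ a ∈ U₁, ∃ b ∈ U₁,
          ∃ z ∈ {z | z ∈ U₂ ∧ ∃ w, w ∉ U₂ ∧ G.Adj z w},
          r = greenKilled p U₃ a z / greenKilled p U₃ b z} * u y :=
  harnack_via_killed_green_general G hconn p hp_nonneg hp_sum hp_supp hp_pos U₁ U₂ U₃ h12 h23 h3fin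
    h3strict h3conn u hu_bdd hu_nonneg hu_harm
end
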